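/- arXiv:2505.05342 — 3 statements merged into one kernel-verified Lean document; each statement's English description precedes it below -/
import Mathlib

section
/- Suppose 𝒱 satisfies the single-well hypotheses, and fix δ > 0. Define J(x;λ) := ∫_{x₊(λ)}^x √(𝒱(x̄;λ) − λ) dx̄ for x > x₊(λ). Then there exist constants C > 0 and λ₀ > 0 such that for all λ ∈ (0, λ₀] and all x ≥ δ, |J(x;λ) − ∫₀^x √𝒱(x̄;λ) dx̄| ≤ C·λ·log(1/λ)·∫₀^x √𝒱(x̄;λ) dx̄. -/
/-!
With `I = ∫₀ˣ √𝒱` and `J = ∫_{x₊}^x √(𝒱 - λ)`, the integrand `√(𝒱 - λ)` vanishes on `[0, x₊]`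
(`Real.sqrt` is `0` on negatives), so
`I - J = ∫₀ˣ (√𝒱 - √(𝒱 - λ))`. This integrand is at most `√λ` everywhere and at most `λ / √𝒱`
where `𝒱 > 0`. Since `∂ₓ²𝒱(0;λ) > 0` uniformly in `λ`, there are `c, r > 0` with `√𝒱 ≥ c x` on
`[0, r]` for all small `λ`, and `√𝒱 ≥ c r` beyond `r` by monotonicity. Splitting `[0, x]` at `rλ`
and `r`, the three pieces are at most `rλ`, `(λ / c) log (1 / λ)` and `λ I / (c r)²`; as
`I ≥ c r² / 2` once `x ≥ r`, each is `O(λ log (1 / λ) I)`.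
-/

open MeasureTheory Set

noncomputable def pdermix (V : ℝ → ℝ → ℝ) (m n : ℕ) (x lam : ℝ) : ℝ :=
  iteratedDeriv m (fun l => iteratedDeriv n (fun x' => V x' l) x) lam

structure SingleWell (V : ℝ → ℝ → ℝ) (lammax δ pp pm Vp Vm : ℝ) : Prop where
  lammax_pos : 0 < lammax
  delta_pos : 0 < δ
  pp_nonneg : 0 ≤ pp
  pm_nonneg : 0 ≤ pm
  Vp_pos : 0 < Vp
  Vm_pos : 0 < Vm
  smooth : ∀ lam ∈ Icc (0:ℝ) lammax, ContDiff ℝ 5 (fun x => V x lam)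
  V_zero : ∀ lam ∈ Icc (0:ℝ) lammax, V 0 lam = 0
  dV_zero : ∀ lam ∈ Icc (0:ℝ) lammax, deriv (fun x => V x lam) 0 = 0
  d2V_pos : ∀ lam ∈ Icc (0:ℝ) lammax, 0 < iteratedDeriv 2 (fun x => V x lam) 0
  dV_pos : ∀ lam ∈ Icc (0:ℝ) lammax, ∀ x : ℝ, 0 < x → 0 < deriv (fun x' => V x' lam) x
  dV_neg : ∀ lam ∈ Icc (0:ℝ) lammax, ∀ x : ℝ, x < 0 → deriv (fun x' => V x' lam) x < 0
  asympP : ∀ η > (0:ℝ), ∃ X > (0:ℝ), ∀ lam ∈ Icc (0:ℝ) lammax, ∀ x ≥ X,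
      |V x lam - Vp * |x| ^ pp| ≤ η * (Vp * |x| ^ pp)
  asympM : ∀ η > (0:ℝ), ∃ X > (0:ℝ), ∀ lam ∈ Icc (0:ℝ) lammax, ∀ x ≤ -X,
      |V x lam - Vm * |x| ^ pm| ≤ η * (Vm * |x| ^ pm)
  derivP : ∃ C > (0:ℝ), ∃ X > (0:ℝ), ∀ lam ∈ Icc (0:ℝ) lammax, ∀ x ≥ X,
      |deriv (fun x' => V x' lam) x| ≤ C * |x| ^ (pp - 1) ∧
      |iteratedDeriv 2 (fun x' => V x' lam) x| ≤ C * |x| ^ (pp - 2)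
  derivM : ∃ C > (0:ℝ), ∃ X > (0:ℝ), ∀ lam ∈ Icc (0:ℝ) lammax, ∀ x ≤ -X,
      |deriv (fun x' => V x' lam) x| ≤ C * |x| ^ (pm - 1) ∧
      |iteratedDeriv 2 (fun x' => V x' lam) x| ≤ C * |x| ^ (pm - 2)
  mixed_cont : ∀ m ≤ 2, ∀ n ≤ 5, ContinuousOn
      (fun p : ℝ × ℝ => pdermix V m n p.1 p.2)
      (Ioo (-δ) δ ×ˢ Icc (0:ℝ) lammax)

/-- The defining properties of the Langer transformation for potential `W := 𝒱(·;λ) - λ`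
(so that the right-hand side of the ODE is `W x`), turning points `xm < xp`, parameter `b < 0`. -/
def IsLanger (W : ℝ → ℝ) (xm xp b : ℝ) (g : ℝ → ℝ) : Prop :=
  Continuous g ∧ StrictMono g ∧
  g xp = 2 * Real.sqrt (-b) ∧ g xm = -(2 * Real.sqrt (-b)) ∧
  ∀ x : ℝ, x ≠ xm → x ≠ xp →
    DifferentiableAt ℝ g x ∧ 0 < deriv g x ∧
    (deriv g x) ^ 2 * ((1/4) * (g x) ^ 2 + b) = W x

noncomputable def bParam (W : ℝ → ℝ) (xm xp : ℝ) : ℝ :=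
  -(1 / Real.pi) * ∫ x in xm..xp, Real.sqrt (-(W x))

section SqrtDeficit

variable {a lam : ℝ}

theorem sqrt_sub_sqrt_sub_nonneg (hlam : 0 ≤ lam) : 0 ≤ √a - √(a - lam) :=
  sub_nonneg.2 (Real.sqrt_le_sqrt (by linarith))

theorem sqrt_sub_sqrt_sub_le_sqrt (hlam : 0 ≤ lam) : √a - √(a - lam) ≤ √lam := by
  rcases le_total a lam with hle | hle
  · linarith [Real.sqrt_le_sqrt hle, Real.sqrt_nonneg (a - lam)]
  · have hsum : a ≤ (√(a - lam) + √lam) ^ 2 := by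
      nlinarith [Real.sq_sqrt (sub_nonneg.2 hle), Real.sq_sqrt hlam, Real.sqrt_nonneg (a - lam),
        Real.sqrt_nonneg lam]
    have := Real.sqrt_le_sqrt hsum
    rw [Real.sqrt_sq (by positivity)] at this
    linarith

theorem sqrt_sub_sqrt_sub_le_div (hlam : 0 ≤ lam) (ha : 0 < a) :
    √a - √(a - lam) ≤ lam / √a := by
  have hsa : 0 < √a := Real.sqrt_pos.2 ha
  rw [le_div_iff₀ hsa, sub_mul, Real.mul_self_sqrt ha.le]
  rcases le_total a lam with hle | hle
  · nlinarith [Real.sqrt_nonneg (a - lam)]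
  · have hsq := Real.mul_self_sqrt (sub_nonneg.2 hle)
    nlinarith [Real.sqrt_le_sqrt (show a - lam ≤ a by linarith), Real.sqrt_nonneg (a - lam)]

end SqrtDeficit

section IntegralDeficit

variable {f : ℝ → ℝ} {lam : ℝ}

theorem integral_sqrt_sub_sub_integral_sqrt (hf : Continuous f) {P : ℝ} (hP : 0 ≤ P)
    (hle : ∀ t ∈ Icc 0 P, f t ≤ lam) (x : ℝ) :
    (∫ t in P..x, √(f t - lam)) - ∫ t in (0 : ℝ)..x, √(f t) =
      -∫ t in (0 : ℝ)..x, (√(f t) - √(f t - lam)) := by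
  have hsqrt : Continuous fun t => √(f t) := hf.sqrt
  have hsqrt_sub : Continuous fun t => √(f t - lam) := (hf.sub continuous_const).sqrt
  have hzero : ∫ t in (0 : ℝ)..P, √(f t - lam) = 0 := by
    rw [intervalIntegral.integral_congr (g := fun _ => (0 : ℝ)) fun t ht => ?_,
      intervalIntegral.integral_zero]
    rw [uIcc_of_le hP] at ht
    exact Real.sqrt_eq_zero_of_nonpos (by linarith [hle t ht])
  rw [intervalIntegral.integral_sub (hsqrt.intervalIntegrable _ _)
    (hsqrt_sub.intervalIntegrable _ _), ← intervalIntegral.integral_add_adjacent_intervals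
    (hsqrt_sub.intervalIntegrable 0 P) (hsqrt_sub.intervalIntegrable P x), hzero]
  ring

variable {c r x : ℝ}

theorem integral_sqrt_sub_sqrt_sub_le_log {s : ℝ} (hf : Continuous f) (hc : 0 < c) (hs : 0 < s)
    (hsr : s ≤ r) (hlow : ∀ t ∈ Icc s r, c * t ≤ √(f t)) (hlam : 0 ≤ lam) :
    ∫ t in s..r, (√(f t) - √(f t - lam)) ≤ lam / c * Real.log (r / s) := by
  have hpos : ∀ t ∈ uIcc s r, 0 < t := fun t ht => hs.trans_le (uIcc_of_le hsr ▸ ht).1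
  calc _ ≤ ∫ t in s..r, lam / c * t⁻¹ := by
        refine intervalIntegral.integral_mono_on hsr
          (Continuous.intervalIntegrable (by fun_prop) _ _)
          ((continuousOn_const.mul (continuousOn_inv₀.mono fun t ht => (hpos t ht).ne'))
            |>.intervalIntegrable) fun t ht => ?_
        have hct : 0 < c * t := mul_pos hc (hs.trans_le ht.1)
        calc _ ≤ lam / √(f t) :=
              sqrt_sub_sqrt_sub_le_div hlam (Real.sqrt_pos.1 (hct.trans_le (hlow t ht)))
          _ ≤ lam / (c * t) := div_le_div_of_nonneg_left hlam hct (hlow t ht)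
          _ = lam / c * t⁻¹ := by ring
    _ = lam / c * Real.log (r / s) := by
        rw [intervalIntegral.integral_const_mul, integral_inv_of_pos hs (hs.trans_le hsr)]

theorem integral_sqrt_sub_sqrt_sub_le_mul_integral {b : ℝ} (hf : Continuous f) (hb : 0 < b)
    (hrx : r ≤ x) (hlow : ∀ t ∈ Icc r x, b ≤ √(f t)) (hlam : 0 ≤ lam) :
    ∫ t in r..x, (√(f t) - √(f t - lam)) ≤ lam / b ^ 2 * ∫ t in r..x, √(f t) := by
  rw [← intervalIntegral.integral_const_mul]
  refine intervalIntegral.integral_mono_on hrx (Continuous.intervalIntegrable (by fun_prop) _ _)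
    (Continuous.intervalIntegrable (by fun_prop) _ _) fun t ht => ?_
  have hu0 : 0 < √(f t) := hb.trans_le (hlow t ht)
  calc _ ≤ lam / √(f t) := sqrt_sub_sqrt_sub_le_div hlam (Real.sqrt_pos.1 hu0)
    _ = lam / √(f t) ^ 2 * √(f t) := by field_simp
    _ ≤ lam / b ^ 2 * √(f t) := by gcongr; exact hlow t ht

theorem integral_sqrt_sub_sqrt_sub_le (hf : Continuous f) (hmono : MonotoneOn f (Ici 0))
    (hc : 0 < c) (hr : 0 < r) (hlow : ∀ t ∈ Icc 0 r, c * t ≤ √(f t)) (hlam : 0 < lam)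
    (hlam1 : lam ≤ 1) (hrx : r ≤ x) :
    ∫ t in (0 : ℝ)..x, (√(f t) - √(f t - lam)) ≤
      r * lam + lam / c * Real.log (1 / lam) +
        lam / (c * r) ^ 2 * ∫ t in (0 : ℝ)..x, √(f t) := by
  have hdef : Continuous fun t => √(f t) - √(f t - lam) := by fun_prop
  set s := r * lam
  have hs : 0 < s := mul_pos hr hlam
  have hsr : s ≤ r := mul_le_of_le_one_right hr.le hlam1
  have hnear : ∫ t in (0 : ℝ)..s, (√(f t) - √(f t - lam)) ≤ s := by
    calc _ ≤ ∫ _ in (0 : ℝ)..s, (1 : ℝ) :=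
          intervalIntegral.integral_mono_on hs.le (hdef.intervalIntegrable _ _)
            intervalIntegrable_const
            fun t _ => (sqrt_sub_sqrt_sub_le_sqrt hlam.le).trans (Real.sqrt_le_one.mpr hlam1)
      _ = s := by simp
  have hmid := integral_sqrt_sub_sqrt_sub_le_log hf hc hs hsr
    (fun t ht => hlow t ⟨hs.le.trans ht.1, ht.2⟩) hlam.le
  rw [div_mul_cancel_left₀ hr.ne', ← one_div] at hmid
  have hfar := integral_sqrt_sub_sqrt_sub_le_mul_integral hf (mul_pos hc hr) hrx
    (fun t ht => (hlow r ⟨hr.le, le_rfl⟩).trans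
      (Real.sqrt_le_sqrt (hmono hr.le (hr.le.trans ht.1) ht.1))) hlam.le
  have htail : ∫ t in r..x, √(f t) ≤ ∫ t in (0 : ℝ)..x, √(f t) :=
    intervalIntegral.integral_mono_interval hr.le hrx le_rfl
      (Filter.Eventually.of_forall fun t => Real.sqrt_nonneg (f t))
      (Continuous.intervalIntegrable (by fun_prop) _ _)
  rw [← intervalIntegral.integral_add_adjacent_intervals (hdef.intervalIntegrable 0 s)
      (hdef.intervalIntegrable s x), ← intervalIntegral.integral_add_adjacent_intervals
      (hdef.intervalIntegrable s r) (hdef.intervalIntegrable r x)]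
  linarith [mul_le_mul_of_nonneg_left htail (by positivity : 0 ≤ lam / (c * r) ^ 2)]

theorem integral_sqrt_sub_sqrt_sub_le_mul_log (hf : Continuous f) (hmono : MonotoneOn f (Ici 0))
    (hc : 0 < c) (hr : 0 < r) (hlow : ∀ t ∈ Icc 0 r, c * t ≤ √(f t)) (hlam : 0 < lam)
    (hlam1 : lam ≤ Real.exp (-1)) (hrx : r ≤ x) :
    ∫ t in (0 : ℝ)..x, (√(f t) - √(f t - lam)) ≤
      (2 / (c * r) + 3 / (c * r) ^ 2) * lam * Real.log (1 / lam) *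
        ∫ t in (0 : ℝ)..x, √(f t) := by
  set I := ∫ t in (0 : ℝ)..x, √(f t)
  have hL : 1 ≤ Real.log (1 / lam) := by
    have := Real.log_le_log hlam hlam1
    rw [Real.log_exp] at this
    rw [one_div, Real.log_inv]
    linarith
  set L := Real.log (1 / lam)
  have hI : c * r ^ 2 / 2 ≤ I :=
    calc c * r ^ 2 / 2 = ∫ t in (0 : ℝ)..r, c * t := by
          rw [intervalIntegral.integral_const_mul, integral_id]; ring
      _ ≤ ∫ t in (0 : ℝ)..r, √(f t) :=
          intervalIntegral.integral_mono_on hr.le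
            ((continuous_const_mul c).intervalIntegrable _ _) (hf.sqrt.intervalIntegrable _ _)
            hlow
      _ ≤ I := intervalIntegral.integral_mono_interval le_rfl hr.le hrx
          (Filter.Eventually.of_forall fun t => Real.sqrt_nonneg (f t))
          (hf.sqrt.intervalIntegrable _ _)
  have hI_ratio : 1 ≤ 2 * I / (c * r ^ 2) := by
    rw [le_div_iff₀ (by positivity)]
    linarith
  have hI0 : 0 ≤ I := le_trans (by positivity) hI
  calc _ ≤ r * lam + lam / c * L + lam / (c * r) ^ 2 * I :=
        integral_sqrt_sub_sqrt_sub_le hf hmono hc hr hlow hlam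
          (hlam1.trans (Real.exp_le_one_iff.2 (by norm_num))) hrx
    _ ≤ r * lam * (L * (2 * I / (c * r ^ 2))) + lam / c * L * (2 * I / (c * r ^ 2)) +
          lam / (c * r) ^ 2 * I * L :=
        add_le_add_three
          (le_mul_of_one_le_right (by positivity) (one_le_mul_of_one_le_of_one_le hL hI_ratio))
          (le_mul_of_one_le_right (by positivity) hI_ratio)
          (le_mul_of_one_le_right (by positivity) hL)
    _ = (2 / (c * r) + 3 / (c * r) ^ 2) * lam * L * I := by
        field_simp
        ring

end IntegralDeficit

theorem exists_pos_le_of_continuousOn_of_pos {F : ℝ × ℝ → ℝ} {R : ℝ} {K : Set ℝ} (hR : 0 < R)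
    (hK : IsCompact K) (hF : ContinuousOn F (Icc 0 R ×ˢ K)) (hpos : ∀ l ∈ K, 0 < F (0, l)) :
    ∃ κ > 0, ∃ r > 0, ∀ l ∈ K, ∀ t ∈ Icc 0 r, κ ≤ F (t, l) := by
  rcases K.eq_empty_or_nonempty with rfl | hne
  · exact ⟨1, one_pos, 1, one_pos, by simp⟩
  have h0R : (0 : ℝ) ∈ Icc 0 R := left_mem_Icc.2 hR.le
  obtain ⟨l₀, hl₀, hmin⟩ := hK.exists_isMinOn hne
    (hF.comp (by fun_prop) fun l hl => ⟨h0R, hl⟩ : ContinuousOn (fun l => F (0, l)) K)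
  set κ := F (0, l₀) / 2 with hκ_def
  have hκ : 0 < κ := half_pos (hpos l₀ hl₀)
  obtain ⟨ρ, hρ, hclose⟩ := Metric.uniformContinuousOn_iff.1
    ((isCompact_Icc.prod hK).uniformContinuousOn_of_continuous hF) κ hκ
  refine ⟨κ, hκ, min (ρ / 2) R, lt_min (half_pos hρ) hR, fun l hl t ht => ?_⟩
  have htρ : t < ρ := by linarith [ht.2.trans (min_le_left _ _)]
  have hdist : dist (t, l) (0, l) < ρ := by
    simpa [Prod.dist_eq, Real.dist_eq, abs_of_nonneg ht.1, hρ] using htρ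
  have hF_close := hclose (t, l) ⟨⟨ht.1, ht.2.trans (min_le_right _ _)⟩, hl⟩ (0, l) ⟨h0R, hl⟩ hdist
  have hF_min : F (0, l₀) ≤ F (0, l) := hmin hl
  rw [Real.dist_eq, abs_lt] at hF_close
  linarith [hF_close.1, hκ_def]

theorem quadratic_le_of_le_iteratedDeriv_two {f : ℝ → ℝ} {κ r : ℝ} (hf : ContDiff ℝ 2 f)
    (h0 : f 0 = 0) (h1 : deriv f 0 = 0) (hκ : ∀ t ∈ Icc 0 r, κ ≤ iteratedDeriv 2 f t) :
    ∀ t ∈ Icc 0 r, κ / 2 * t ^ 2 ≤ f t := by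
  rintro t ⟨ht0, htr⟩
  rcases ht0.eq_or_lt with rfl | ht0
  · simp [h0]
  obtain ⟨ξ, hξ, hTaylor⟩ :=
    taylor_mean_remainder_lagrange_iteratedDeriv (n := 1) ht0.ne hf.contDiffOn
  have hderiv : derivWithin f (uIcc 0 t) 0 = 0 := by
    rw [(hf.differentiable (by norm_num) 0).derivWithin
      ((uniqueDiffOn_uIcc ht0.ne) 0 left_mem_uIcc), h1]
  have hft : f t = iteratedDeriv 2 f ξ * t ^ 2 / 2 := by
    simpa [taylor_within_apply, hderiv, h0] using hTaylor
  rw [uIoo_of_le ht0.le] at hξ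
  have hκξ := hκ ξ ⟨hξ.1.le, hξ.2.le.trans htr⟩
  rw [hft]
  nlinarith [sq_nonneg t]

theorem SingleWell.monotoneOn_Ici {V : ℝ → ℝ → ℝ} {lammax δ pp pm Vp Vm lam : ℝ}
    (hV : SingleWell V lammax δ pp pm Vp Vm) (hlam : lam ∈ Icc 0 lammax) :
    MonotoneOn (fun x => V x lam) (Ici 0) := by
  have hsmooth := hV.smooth lam hlam
  refine monotoneOn_of_deriv_nonneg (convex_Ici 0) hsmooth.continuous.continuousOn
    (hsmooth.differentiable (by norm_num)).differentiableOn fun t ht => ?_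
  rw [interior_Ici] at ht
  exact (hV.dV_pos lam hlam t ht).le

theorem SingleWell.exists_mul_sq_le {V : ℝ → ℝ → ℝ} {lammax δ pp pm Vp Vm : ℝ}
    (hV : SingleWell V lammax δ pp pm Vp Vm) :
    ∃ κ > 0, ∃ r > 0, ∀ lam ∈ Icc 0 lammax, ∀ t ∈ Icc 0 r, κ * t ^ 2 ≤ V t lam := by
  have hδ := hV.delta_pos
  have hcont : ContinuousOn (fun p : ℝ × ℝ => iteratedDeriv 2 (fun x => V x p.2) p.1)
      (Icc 0 (δ / 2) ×ˢ Icc 0 lammax) := by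
    have hmixed := hV.mixed_cont 0 (by norm_num) 2 (by norm_num)
    simp only [pdermix, iteratedDeriv_zero] at hmixed
    exact hmixed.mono (prod_mono (fun t ht => ⟨by linarith [ht.1], by linarith [ht.2]⟩) le_rfl)
  obtain ⟨κ, hκ, r, hr, hbound⟩ := exists_pos_le_of_continuousOn_of_pos (half_pos hδ)
    isCompact_Icc hcont hV.d2V_pos
  refine ⟨κ / 2, half_pos hκ, r, hr, fun lam hlam => ?_⟩
  exact quadratic_le_of_le_iteratedDeriv_two ((hV.smooth lam hlam).of_le (by norm_num))
    (hV.V_zero lam hlam) (hV.dV_zero lam hlam) (hbound lam hlam)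

/-- **Outer asymptotics of `J(x;λ) = ∫_{x₊(λ)}^x √(𝒱−λ)`.**
Uniformly for `x ≥ δ`, `J(x;λ) = (∫₀ˣ √𝒱)(1 + O(λ log(1/λ)))` as `λ ↓ 0`. -/
theorem J_outer_asymptotics (V : ℝ → ℝ → ℝ) (lammax δ pp pm Vp Vm : ℝ)
    (hV : SingleWell V lammax δ pp pm Vp Vm)
    (xm xp : ℝ → ℝ)
    (hx : ∀ lam : ℝ, 0 < lam → lam ≤ lammax →
      xm lam < 0 ∧ 0 < xp lam ∧ V (xm lam) lam = lam ∧ V (xp lam) lam = lam)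
    (δ' : ℝ) (hδ' : 0 < δ') :
    ∃ C > (0:ℝ), ∃ lam0 > (0:ℝ), lam0 ≤ lammax ∧
      ∀ lam : ℝ, 0 < lam → lam ≤ lam0 → ∀ x : ℝ, δ' ≤ x →
        |(∫ t in (xp lam)..x, Real.sqrt (V t lam - lam)) -
            ∫ t in (0:ℝ)..x, Real.sqrt (V t lam)| ≤
          C * lam * Real.log (1/lam) * ∫ t in (0:ℝ)..x, Real.sqrt (V t lam) := by
  obtain ⟨κ, hκ, r₀, hr₀, hquad⟩ := hV.exists_mul_sq_le
  set r := min r₀ δ'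
  set c := √κ
  have hr : 0 < r := lt_min hr₀ hδ'
  have hc : 0 < c := Real.sqrt_pos.2 hκ
  refine ⟨2 / (c * r) + 3 / (c * r) ^ 2, by positivity, min lammax (Real.exp (-1)),
    lt_min hV.lammax_pos (Real.exp_pos _), min_le_left _ _, fun lam hlam hlam0 x hx' => ?_⟩
  have hlamIcc : lam ∈ Icc 0 lammax := ⟨hlam.le, hlam0.trans (min_le_left _ _)⟩
  obtain ⟨-, hP, -, hVP⟩ := hx lam hlam hlamIcc.2
  have hmono := hV.monotoneOn_Ici hlamIcc
  have hcont : Continuous fun t => V t lam := (hV.smooth lam hlamIcc).continuous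
  have hlow : ∀ t ∈ Icc 0 r, c * t ≤ √(V t lam) := fun t ht =>
    calc c * t = √(κ * t ^ 2) := by rw [Real.sqrt_mul hκ.le, Real.sqrt_sq ht.1]
      _ ≤ √(V t lam) :=
          Real.sqrt_le_sqrt (hquad lam hlamIcc t ⟨ht.1, ht.2.trans (min_le_left _ _)⟩)
  have hwell : ∀ t ∈ Icc 0 (xp lam), V t lam ≤ lam := fun t ht =>
    (hmono ht.1 hP.le ht.2).trans_eq hVP
  have hrx : r ≤ x := (min_le_right _ _).trans hx'
  rw [integral_sqrt_sub_sub_integral_sqrt hcont hP.le hwell, abs_neg,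
    abs_of_nonneg (intervalIntegral.integral_nonneg (hr.le.trans hrx)
      fun t _ => sqrt_sub_sqrt_sub_nonneg hlam.le)]
  exact integral_sqrt_sub_sqrt_sub_le_mul_log hcont hmono hc hr hlow hlam
    (hlam0.trans (min_le_right _ _)) hrx
end

section
/- Let B be a 2×2 real matrix with entries B₁₁, B₁₂, B₂₁, B₂₂, and let γ be a real number. Then the 4×4 matrix M whose rows are (γB₁₁, det B, γB₁₂, 0), (−γ, B₁₁, 0, B₁₂), (γB₂₁, 0, γB₂₂, det B), and (0, B₂₁, −γ, B₂₂) satisfies det M = γ²·det(B)·(B₁₁ + B₂₂)². In particular, if B is traceless (B₁₁ + B₂₂ = 0), then det M = 0, so M has nontrivial kernel. -/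
open Matrix

def gaugeSystemMatrix (B : Matrix (Fin 2) (Fin 2) ℝ) (γ : ℝ) : Matrix (Fin 4) (Fin 4) ℝ :=
  !![γ * B 0 0, B.det, γ * B 0 1, 0;
     -γ, B 0 0, 0, B 0 1;
     γ * B 1 0, 0, γ * B 1 1, B.det;
     0, B 1 0, -γ, B 1 1]

theorem det_gaugeSystemMatrix (B : Matrix (Fin 2) (Fin 2) ℝ) (γ : ℝ) :
    (gaugeSystemMatrix B γ).det = γ ^ 2 * B.det * B.trace ^ 2 := by
  simp [gaugeSystemMatrix, det_succ_row_zero, Fin.sum_univ_succ, trace_fin_two,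
    Fin.succAbove]
  ring

/-- **Determinant identity for the gauge-transformation linear system.**
For a 2×2 real matrix `B` and scalar `γ`, the 4×4 coefficient matrix `M` of the
homogeneous system for the gauge matrix satisfies
`det M = γ² det(B) (B₁₁ + B₂₂)²`; in particular, if `B` is traceless then `det M = 0`,
so `M` has nontrivial kernel. -/
theorem gauge_system_det (B : Matrix (Fin 2) (Fin 2) ℝ) (γ : ℝ)
    (M : Matrix (Fin 4) (Fin 4) ℝ)
    (hM : M = !![γ * B 0 0, B.det, γ * B 0 1, 0;
                 -γ, B 0 0, 0, B 0 1;
                 γ * B 1 0, 0, γ * B 1 1, B.det;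
                 0, B 1 0, -γ, B 1 1]) :
    M.det = γ ^ 2 * B.det * (B 0 0 + B 1 1) ^ 2 ∧
    (B 0 0 + B 1 1 = 0 → M.det = 0 ∧ ∃ v : Fin 4 → ℝ, v ≠ 0 ∧ M.mulVec v = 0) := by
  have hdet : M.det = γ ^ 2 * B.det * (B 0 0 + B 1 1) ^ 2 := by
    rw [hM, ← trace_fin_two, ← det_gaugeSystemMatrix]
    rfl
  refine ⟨hdet, fun htrace => ?_⟩
  have hsingular : M.det = 0 := by rw [hdet, htrace]; ring
  exact ⟨hsingular, exists_mulVec_eq_zero_iff.mpr hsingular⟩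
end

section
/- There exists a constant C > 0 such that for all ε ∈ (0, 1/2], ∫₀^∞ dy/((1+y²)·√(1 + y²/ε)) ≤ C·ε^{1/2}·log(1/ε). -/
open MeasureTheory

/-! Split `(0, ∞)` at `√ε` and `1`. Since `√(1 + y²/ε) ≥ max 1 (y/√ε)`, the integrand is at most
`1` on `(0, √ε]`, at most `√ε / y` on `[√ε, 1]` and at most `√ε / (1 + y²)` on `(1, ∞)`. The middle
piece contributes `√ε log (1/√ε) = ½ √ε log (1/ε)`; the other two are `O(√ε)`, which is absorbed
because `log (1/ε) ≥ log 2` for `ε ≤ 1/2`. -/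

noncomputable def weight (ε y : ℝ) : ℝ := 1 / ((1 + y ^ 2) * √(1 + y ^ 2 / ε))

section Weight

open Real Set

variable {ε : ℝ}

lemma one_le_sqrt_one_add_sq_div (hε : 0 ≤ ε) (y : ℝ) : 1 ≤ √(1 + y ^ 2 / ε) :=
  one_le_sqrt.2 (le_add_of_nonneg_right (by positivity))

lemma div_sqrt_le_sqrt_one_add_sq_div (hε : 0 ≤ ε) {y : ℝ} (hy : 0 ≤ y) :
    y / √ε ≤ √(1 + y ^ 2 / ε) := by
  conv_lhs => rw [← sqrt_sq hy, ← sqrt_div' _ hε]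
  exact sqrt_le_sqrt (le_add_of_nonneg_left zero_le_one)

lemma weight_nonneg (y : ℝ) : 0 ≤ weight ε y := by
  unfold weight; positivity

lemma weight_le_inv_one_add_sq (hε : 0 ≤ ε) (y : ℝ) : weight ε y ≤ (1 + y ^ 2)⁻¹ := by
  rw [weight, one_div, inv_le_inv₀ (by positivity) (by positivity)]
  exact le_mul_of_one_le_right (by positivity) (one_le_sqrt_one_add_sq_div hε y)

lemma weight_le_sqrt_div (hε : 0 < ε) {y : ℝ} (hy : 0 < y) :
    weight ε y ≤ √ε / (y * (1 + y ^ 2)) := by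
  have key : y * (1 + y ^ 2) / √ε ≤ (1 + y ^ 2) * √(1 + y ^ 2 / ε) := by
    rw [mul_comm y, mul_div_assoc]
    gcongr
    exact div_sqrt_le_sqrt_one_add_sq_div hε.le hy.le
  calc weight ε y ≤ 1 / (y * (1 + y ^ 2) / √ε) :=
        one_div_le_one_div_of_le (by positivity) key
    _ = √ε / (y * (1 + y ^ 2)) := one_div_div _ _

lemma continuous_weight (hε : 0 ≤ ε) : Continuous (weight ε) := by
  refine continuous_const.div (by fun_prop) fun y => ?_
  have := one_le_sqrt_one_add_sq_div hε y
  positivity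

lemma integrable_weight (hε : 0 ≤ ε) : Integrable (weight ε) :=
  integrable_inv_one_add_sq.mono' (continuous_weight hε).aestronglyMeasurable
    (.of_forall fun y => by
      rw [norm_of_nonneg (weight_nonneg y)]
      exact weight_le_inv_one_add_sq hε y)

lemma integral_weight_zero_le (hε : 0 ≤ ε) {a : ℝ} (ha : 0 ≤ a) :
    ∫ y in (0 : ℝ)..a, weight ε y ≤ a := by
  calc ∫ y in (0 : ℝ)..a, weight ε y ≤ ∫ _ in (0 : ℝ)..a, (1 : ℝ) :=
        intervalIntegral.integral_mono_on ha (integrable_weight hε).intervalIntegrable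
          intervalIntegrable_const fun y _ =>
            (weight_le_inv_one_add_sq hε y).trans (inv_le_one_of_one_le₀ (le_add_of_nonneg_right (sq_nonneg y)))
    _ = a := by simp

lemma integral_weight_le_sqrt_mul_log (hε : 0 < ε) {a b : ℝ} (ha : 0 < a) (hab : a ≤ b) :
    ∫ y in a..b, weight ε y ≤ √ε * log (b / a) := by
  have hpos : ∀ y ∈ Icc a b, 0 < y := fun y hy => ha.trans_le hy.1
  calc ∫ y in a..b, weight ε y ≤ ∫ y in a..b, √ε * y⁻¹ := by
        refine intervalIntegral.integral_mono_on hab (integrable_weight hε.le).intervalIntegrable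
          ((intervalIntegral.intervalIntegrable_inv (fun y hy => ?_) continuousOn_id).const_mul _)
          fun y hy => ?_
        · rw [uIcc_of_le hab] at hy
          exact (hpos y hy).ne'
        · refine (weight_le_sqrt_div hε (hpos y hy)).trans ?_
          rw [← div_eq_mul_inv]
          gcongr
          · exact hpos y hy
          · exact le_mul_of_one_le_right (hpos y hy).le (le_add_of_nonneg_right (sq_nonneg y))
    _ = √ε * log (b / a) := by
        rw [intervalIntegral.integral_const_mul, integral_inv_of_pos ha (ha.trans_le hab)]

lemma setIntegral_Ioi_one_weight_le (hε : 0 < ε) :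
    ∫ y in Ioi 1, weight ε y ≤ √ε * (π / 4) := by
  calc ∫ y in Ioi 1, weight ε y ≤ ∫ y in Ioi 1, √ε * (1 + y ^ 2)⁻¹ := by
        refine setIntegral_mono_on (integrable_weight hε.le).integrableOn
          (integrable_inv_one_add_sq.const_mul _).integrableOn measurableSet_Ioi fun y hy => ?_
        have hy : (1 : ℝ) < y := hy
        refine (weight_le_sqrt_div hε (one_pos.trans hy)).trans ?_
        rw [← div_eq_mul_inv]
        gcongr
        exact le_mul_of_one_le_left (by positivity) hy.le
    _ = √ε * (π / 4) := by
        rw [integral_const_mul, integral_Ioi_inv_one_add_sq, arctan_one]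
        ring

end Weight

/-- **A uniform integral estimate:** there is `C > 0` such that for all `ε ∈ (0, 1/2]`,
`∫₀^∞ dy/((1+y²)√(1+y²/ε)) ≤ C ε^{1/2} log(1/ε)`. -/
theorem integral_weight_bound :
    ∃ C > (0:ℝ), ∀ ε : ℝ, 0 < ε → ε ≤ 1/2 →
      (∫ y in Set.Ioi (0:ℝ), 1 / ((1 + y ^ 2) * Real.sqrt (1 + y ^ 2 / ε))) ≤
        C * ε ^ ((1:ℝ)/2) * Real.log (1/ε) := by
  refine ⟨4, by norm_num, fun ε hε hε2 => ?_⟩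
  have hs : 0 < √ε := Real.sqrt_pos.2 hε
  have hs1 : √ε ≤ 1 := Real.sqrt_le_one.2 (by linarith)
  have hlog : Real.log (1 / √ε) = Real.log (1 / ε) / 2 := by
    rw [one_div, one_div, Real.log_inv, Real.log_inv, Real.log_sqrt hε.le]
    ring
  have hL : Real.log 2 ≤ Real.log (1 / ε) :=
    Real.log_le_log two_pos (by rw [le_div_iff₀ hε]; linarith)
  have hint : ∀ a b, IntervalIntegrable (weight ε) volume a b := fun _ _ =>
    (integrable_weight hε.le).intervalIntegrable
  change ∫ y in Set.Ioi 0, weight ε y ≤ _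
  rw [← Real.sqrt_eq_rpow, ← intervalIntegral.integral_interval_add_Ioi
      (integrable_weight hε.le).integrableOn (integrable_weight hε.le).integrableOn,
    ← intervalIntegral.integral_add_adjacent_intervals (b := √ε) (hint _ _) (hint _ _)]
  calc _ ≤ √ε + √ε * Real.log (1 / √ε) + √ε * (Real.pi / 4) := by
        gcongr
        · exact integral_weight_zero_le hε.le hs.le
        · exact integral_weight_le_sqrt_mul_log hε hs hs1
        · exact setIntegral_Ioi_one_weight_le hε
    _ ≤ 4 * √ε * Real.log (1 / ε) := by
        rw [hlog]
        nlinarith [Real.log_two_gt_d9, Real.pi_lt_d2]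
end
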